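/- arXiv:1408.1904 — 2 statements merged into one kernel-verified Lean document; each statement's English description precedes it below -/
import Mathlib

section
/- For all natural numbers i and all positive integers p, the polynomial congruence ℒ_p^i(X) ≡ (−1)^p X^p (mod p) holds in ℤ[X]. -/
open Polynomial MvPolynomial

/-- The scaled generalized Laguerre polynomial `ℒ_n^α(X) = n! · L_n^α(X) ∈ ℤ[X]`. -/
noncomputable def sLag (n α : ℕ) : Polynomial ℤ :=
  ∑ j ∈ Finset.range (n + 1),
    Polynomial.C ((-1 : ℤ) ^ j * ((n.factorial / j.factorial : ℕ) : ℤ) *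
      ((n + α).choose (n - j) : ℤ)) * Polynomial.X ^ j

open Nat in
theorem Nat.dvd_factorial_div_factorial {n k : ℕ} (h : k < n) : n ∣ n ! / k ! := by
  obtain ⟨m, rfl⟩ := Nat.exists_eq_add_one_of_ne_zero (Nat.ne_zero_of_lt h)
  rw [Nat.factorial_succ, Nat.mul_div_assoc _ (Nat.factorial_dvd_factorial (Nat.le_of_lt_succ h))]
  exact dvd_mul_right _ _

theorem coeff_sLag (n α k : ℕ) :
    (sLag n α).coeff k = if k ≤ n then
      (-1) ^ k * ((n.factorial / k.factorial : ℕ) : ℤ) * ((n + α).choose (n - k) : ℤ) else 0 := by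
  simp only [sLag, finsetSum_coeff, coeff_C_mul_X_pow, Finset.sum_ite_eq, Finset.mem_range,
    Nat.lt_succ_iff]

theorem coeff_sLag_self (n α : ℕ) : (sLag n α).coeff n = (-1) ^ n := by
  simp [coeff_sLag, Nat.div_self (Nat.factorial_pos n)]

theorem dvd_coeff_sLag_of_lt {n α k : ℕ} (h : k < n) : (n : ℤ) ∣ (sLag n α).coeff k := by
  rw [coeff_sLag, if_pos h.le]
  exact ((Int.natCast_dvd_natCast.mpr (Nat.dvd_factorial_div_factorial h)).mul_left _).mul_right _

theorem coeff_sLag_eq_zero_of_lt {n α k : ℕ} (h : n < k) : (sLag n α).coeff k = 0 := by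
  rw [coeff_sLag, if_neg h.not_ge]

theorem stmt_11_general (i : ℕ) (p : ℕ) :
    ∀ k : ℕ, (p : ℤ) ∣
      (sLag p i - Polynomial.C ((-1 : ℤ) ^ p) * Polynomial.X ^ p).coeff k := by
  intro k
  rw [Polynomial.coeff_sub, coeff_C_mul_X_pow]
  rcases lt_trichotomy k p with h | rfl | h
  · rw [if_neg h.ne, sub_zero]
    exact dvd_coeff_sLag_of_lt h
  · rw [if_pos rfl, coeff_sLag_self, sub_self]
    exact dvd_zero _
  · rw [if_neg h.ne', coeff_sLag_eq_zero_of_lt h, sub_zero]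
    exact dvd_zero _

theorem stmt_11 (i : ℕ) (p : ℕ) (hp : 0 < p) :
    ∀ k : ℕ, (p : ℤ) ∣
      (sLag p i - Polynomial.C ((-1 : ℤ) ^ p) * Polynomial.X ^ p).coeff k :=
  stmt_11_general i p
end

section
/- For all positive integers p, q, the polynomial congruence 𝕃_{p,q}(X,Y) ≡ (−1)^{p+q} X^p Y^q (mod gcd(p,q)) holds in ℤ[X,Y]. -/
open Polynomial MvPolynomial

/-- The scaled two-variable Laguerre polynomial
`𝕃_{n,m}(X,Y) = n!·m!·L_{n,m}(X,Y) ∈ ℤ[X,Y]`, with `X = X 0` and `Y = X 1`. -/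
noncomputable def sLag2 (n m : ℕ) : MvPolynomial (Fin 2) ℤ :=
  ∑ i ∈ Finset.range (m + 1), ∑ s ∈ Finset.range (n + 1),
    MvPolynomial.C ((-1 : ℤ) ^ (i + s) * ((m.factorial / i.factorial : ℕ) : ℤ) *
        ((n.factorial / s.factorial : ℕ) : ℤ) *
        ((m + n).choose (m - i) : ℤ) * ((n + i).choose (n - s) : ℤ)) *
      MvPolynomial.X 0 ^ s * MvPolynomial.X 1 ^ i

/-! Every coefficient of `𝕃_{p,q}` other than the leading one `(-1)^{p+q}` (at `X^p Y^q`)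
contains one of the factors `p!/s!` with `s < p` or `q!/i!` with `i < q`, hence is divisible
by `p` or by `q`, and so by `gcd(p, q)`. -/

open Finset

theorem Nat.dvd_factorial_div_factorial_s14 {n j : ℕ} (h : j < n) :
    n ∣ n.factorial / j.factorial := by
  obtain ⟨k, rfl⟩ : ∃ k, n = k + 1 := ⟨n - 1, by omega⟩
  rw [Nat.factorial_succ, Nat.mul_div_assoc _ (Nat.factorial_dvd_factorial (by omega))]
  exact dvd_mul_right _ _

theorem MvPolynomial.dvd_coeff_sum_C_mul {σ R ι : Type*} [CommSemiring R] (s : Finset ι)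
    (c : ι → R) (g : ι → MvPolynomial σ R) {d : R} (h : ∀ x ∈ s, d ∣ c x) (v : σ →₀ ℕ) :
    d ∣ coeff v (∑ x ∈ s, C (c x) * g x) := by
  rw [coeff_sum]
  exact dvd_sum fun x hx => by rw [coeff_C_mul]; exact (h x hx).mul_right _

/-- The coefficient of `X^s Y^i` in `𝕃_{n,m}`. -/
def sLag2Coeff (n m i s : ℕ) : ℤ :=
  (-1) ^ (i + s) * ((m.factorial / i.factorial : ℕ) : ℤ) * ((n.factorial / s.factorial : ℕ) : ℤ) *
    ((m + n).choose (m - i) : ℤ) * ((n + i).choose (n - s) : ℤ)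

theorem sLag2_eq_sum (n m : ℕ) :
    sLag2 n m = ∑ x ∈ range (m + 1) ×ˢ range (n + 1),
      MvPolynomial.C (sLag2Coeff n m x.1 x.2) * (X 0 ^ x.2 * X 1 ^ x.1) := by
  simp only [sLag2, ← mul_assoc]
  exact (sum_product' _ _ _).symm

theorem sLag2Coeff_self (n m : ℕ) : sLag2Coeff n m m n = (-1) ^ (n + m) := by
  simp [sLag2Coeff, Nat.div_self (Nat.factorial_pos _), add_comm m n]

theorem gcd_dvd_sLag2Coeff {n m i s : ℕ} (hi : i ≤ m) (hs : s ≤ n) (hne : (i, s) ≠ (m, n)) :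
    (Nat.gcd n m : ℤ) ∣ sLag2Coeff n m i s := by
  unfold sLag2Coeff
  rcases hi.lt_or_eq with hi | hi
  · have : (Nat.gcd n m : ℤ) ∣ ((m.factorial / i.factorial : ℕ) : ℤ) :=
      Int.natCast_dvd_natCast.mpr
        ((Nat.gcd_dvd_right n m).trans (Nat.dvd_factorial_div_factorial_s14 hi))
    exact (((this.mul_left _).mul_right _).mul_right _).mul_right _
  · have hs : s < n := hs.lt_of_ne fun h => hne (by rw [hi, h])
    have : (Nat.gcd n m : ℤ) ∣ ((n.factorial / s.factorial : ℕ) : ℤ) :=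
      Int.natCast_dvd_natCast.mpr
        ((Nat.gcd_dvd_left n m).trans (Nat.dvd_factorial_div_factorial_s14 hs))
    exact ((this.mul_left _).mul_right _).mul_right _

theorem stmt_14_general (p q : ℕ) :
    ∀ v : Fin 2 →₀ ℕ, (Nat.gcd p q : ℤ) ∣
      MvPolynomial.coeff v
        (sLag2 p q -
          MvPolynomial.C ((-1 : ℤ) ^ (p + q)) * MvPolynomial.X 0 ^ p *
            MvPolynomial.X 1 ^ q) := by
  intro v
  have hmem : (q, p) ∈ range (q + 1) ×ˢ range (p + 1) := by simp
  rw [sLag2_eq_sum, ← add_sum_erase _ _ hmem, sLag2Coeff_self, mul_assoc, add_sub_cancel_left]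
  refine dvd_coeff_sum_C_mul _ _ _ (fun x hx => ?_) v
  obtain ⟨hne, hx⟩ := mem_erase.mp hx
  simp only [mem_product, mem_range] at hx
  exact gcd_dvd_sLag2Coeff (by omega) (by omega) hne

theorem stmt_14 (p q : ℕ) (hp : 0 < p) (hq : 0 < q) :
    ∀ v : Fin 2 →₀ ℕ, (Nat.gcd p q : ℤ) ∣
      MvPolynomial.coeff v
        (sLag2 p q -
          MvPolynomial.C ((-1 : ℤ) ^ (p + q)) * MvPolynomial.X 0 ^ p *
            MvPolynomial.X 1 ^ q) :=
  stmt_14_general p q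
end
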